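/- arXiv:1412.3999 — 4 statements merged into one kernel-verified Lean document; each statement's English description precedes it below -/
import Mathlib

section
/- Let T₁, T₂ be elements of an associative algebra satisfying the braid relation T₁T₂T₁ = T₂T₁T₂ and the Hecke relations Tᵢ² = (q - q⁻¹)Tᵢ + 1 for i = 1,2. Define the baxterized elements T_i(x) = x^{-1}·Tᵢ - x·Tᵢ⁻¹. Then T₁(x)·T₂(xy)·T₁(y) = T₂(y)·T₁(xy)·T₂(x) for all invertible parameters x, y. -/
private lemma expand_aux {K A : Type*} [Field K] [Ring A] [Algebra K A]
    (c : K) (S T : A) (hS : S * S = c • S + 1) (a1 b1 a2 b2 a3 b3 : K) :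
    (a1 • S + b1 • (1:A)) * (a2 • T + b2 • (1:A)) * (a3 • S + b3 • (1:A))
      = (a1*a2*a3) • (S*T*S) + (a1*a2*b3) • (S*T) + (b1*a2*a3) • (T*S)
        + (a1*b2*a3*c + a1*b2*b3 + b1*b2*a3) • S + (b1*a2*b3) • T
        + (b1*b2*b3 + a1*b2*a3) • (1:A) := by
  have h : S * S = c • S + 1 := hS
  simp only [add_mul, mul_add, smul_mul_assoc, mul_smul_comm, smul_smul,
    one_mul, mul_one, h]
  simp only [smul_add, smul_smul]
  module

/-- The baxterized elements `Tᵢ(x) = x⁻¹Tᵢ - x Tᵢ⁻¹` built from Hecke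
algebra generators satisfying the braid relation obey the Yang–Baxter equation
`T₁(x) T₂(xy) T₁(y) = T₂(y) T₁(xy) T₂(x)` (with `x` denoting the square root of the
spectral parameter). -/
theorem baxterized_yang_baxter {K A : Type*} [Field K] [Ring A] [Algebra K A]
    (q : K) (hq : q ≠ 0)
    (T₁ T₂ T₁' T₂' : A)
    (hinv1 : T₁ * T₁' = 1) (hinv1' : T₁' * T₁ = 1)
    (hinv2 : T₂ * T₂' = 1) (hinv2' : T₂' * T₂ = 1)
    (hbraid : T₁ * T₂ * T₁ = T₂ * T₁ * T₂)
    (hH1 : T₁ ^ 2 = (q - q⁻¹) • T₁ + 1)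
    (hH2 : T₂ ^ 2 = (q - q⁻¹) • T₂ + 1)
    (x y : K) (hx : x ≠ 0) (hy : y ≠ 0) :
    (x⁻¹ • T₁ - x • T₁') * ((x * y)⁻¹ • T₂ - (x * y) • T₂') * (y⁻¹ • T₁ - y • T₁')
      = (y⁻¹ • T₂ - y • T₂') * ((x * y)⁻¹ • T₁ - (x * y) • T₁') *
          (x⁻¹ • T₂ - x • T₂') := by
  set c : K := q - q⁻¹ with hc
  have hsq1 : T₁ * T₁ = c • T₁ + 1 := by rw [← sq]; exact hH1
  have hsq2 : T₂ * T₂ = c • T₂ + 1 := by rw [← sq]; exact hH2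
  have h1' : T₁' = T₁ - c • (1:A) := by
    have key : T₁ * (T₁ - c • (1:A)) = 1 := by
      rw [mul_sub, hsq1, mul_smul_comm, mul_one]; abel
    calc T₁' = T₁' * (T₁ * (T₁ - c • (1:A))) := by rw [key, mul_one]
      _ = (T₁' * T₁) * (T₁ - c • (1:A)) := by rw [mul_assoc]
      _ = T₁ - c • (1:A) := by rw [hinv1', one_mul]
  have h2' : T₂' = T₂ - c • (1:A) := by
    have key : T₂ * (T₂ - c • (1:A)) = 1 := by
      rw [mul_sub, hsq2, mul_smul_comm, mul_one]; abel
    calc T₂' = T₂' * (T₂ * (T₂ - c • (1:A))) := by rw [key, mul_one]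
      _ = (T₂' * T₂) * (T₂ - c • (1:A)) := by rw [mul_assoc]
      _ = T₂ - c • (1:A) := by rw [hinv2', one_mul]
  have hb1 : ∀ z : K, z⁻¹ • T₁ - z • T₁' = (z⁻¹ - z) • T₁ + (z * c) • (1:A) := by
    intro z; rw [h1', smul_sub, smul_smul, sub_smul]; abel
  have hb2 : ∀ z : K, z⁻¹ • T₂ - z • T₂' = (z⁻¹ - z) • T₂ + (z * c) • (1:A) := by
    intro z; rw [h2', smul_sub, smul_smul, sub_smul]; abel
  rw [hb1 x, hb1 y, hb1 (x*y), hb2 x, hb2 y, hb2 (x*y)]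
  rw [expand_aux c T₁ T₂ hsq1, expand_aux c T₂ T₁ hsq2, hbraid]
  match_scalars <;> field_simp <;> ring
end

section
/- The permutation (swap) operator P_{k,k+1} on (ℂ²)^{⊗L} exchanging factors k and k+1 equals I + ψ̄_{k+1}ψ_k + ψ̄_kψ_{k+1} - ψ̄_kψ_k - ψ̄_{k+1}ψ_{k+1} + 2ψ̄_kψ_kψ̄_{k+1}ψ_{k+1}, where ψ_k, ψ̄_k are the Jordan–Wigner fermions. -/
open Matrix

noncomputable def sigmaX : Matrix (Fin 2) (Fin 2) ℂ := !![0, 1; 1, 0]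
noncomputable def sigmaY : Matrix (Fin 2) (Fin 2) ℂ := !![0, -Complex.I; Complex.I, 0]
noncomputable def sigmaZ : Matrix (Fin 2) (Fin 2) ℂ := !![1, 0; 0, -1]
noncomputable def sigmaP : Matrix (Fin 2) (Fin 2) ℂ := (1 / 2 : ℂ) • (sigmaX + Complex.I • sigmaY)
noncomputable def sigmaM : Matrix (Fin 2) (Fin 2) ℂ := (1 / 2 : ℂ) • (sigmaX - Complex.I • sigmaY)

/-- The operator `A_j = I⊗⋯⊗A⊗⋯⊗I` acting on the `j`-th factor of `(ℂ²)^{⊗L}`. -/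
noncomputable def site (L : ℕ) (A : Matrix (Fin 2) (Fin 2) ℂ) (j : Fin L) :
    Matrix (Fin L → Fin 2) (Fin L → Fin 2) ℂ :=
  fun f g => A (f j) (g j) * ∏ i ∈ Finset.univ.erase j, (if f i = g i then (1 : ℂ) else 0)

/-- The Jordan–Wigner fermion `ψ_k = (∏_{j<k} σᶻ_j)·σ⁺_k`. -/
noncomputable def psi (L : ℕ) (k : Fin L) :
    Matrix (Fin L → Fin 2) (Fin L → Fin 2) ℂ :=
  (((List.finRange L).filter (fun j => j < k)).map (fun j => site L sigmaZ j)).prod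
    * site L sigmaP k

/-- The Jordan–Wigner fermion `ψ̄_k = (∏_{j<k} σᶻ_j)·σ⁻_k`. -/
noncomputable def psibar (L : ℕ) (k : Fin L) :
    Matrix (Fin L → Fin 2) (Fin L → Fin 2) ℂ :=
  (((List.finRange L).filter (fun j => j < k)).map (fun j => site L sigmaZ j)).prod
    * site L sigmaM k

/-- The swap operator exchanging tensor factors `k` and `l` of `(ℂ²)^{⊗L}`. -/
noncomputable def swapMat (L : ℕ) (k l : Fin L) :
    Matrix (Fin L → Fin 2) (Fin L → Fin 2) ℂ :=
  fun f g => if f = g ∘ Equiv.swap k l then 1 else 0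

/-! ### Auxiliary machinery -/

lemma hZZ : sigmaZ * sigmaZ = 1 := by
  ext i j
  fin_cases i <;> fin_cases j <;>
    norm_num [sigmaZ, Matrix.mul_apply, Fin.sum_univ_two, Matrix.one_apply]
lemma hPval : sigmaP = !![0,1;0,0] := by
  ext i j
  fin_cases i <;> fin_cases j <;> norm_num [sigmaP, sigmaX, sigmaY]
lemma hMval : sigmaM = !![0,0;1,0] := by
  ext i j
  fin_cases i <;> fin_cases j <;> norm_num [sigmaM, sigmaX, sigmaY]
lemma hZP : sigmaZ * sigmaP = !![0,1;0,0] := by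
  ext i j
  fin_cases i <;> fin_cases j <;>
    norm_num [sigmaZ, hPval, Matrix.mul_apply, Fin.sum_univ_two]
lemma hMZ : sigmaM * sigmaZ = !![0,0;1,0] := by
  ext i j
  fin_cases i <;> fin_cases j <;>
    norm_num [sigmaZ, hMval, Matrix.mul_apply, Fin.sum_univ_two]
lemma hMP : sigmaM * sigmaP = !![0,0;0,1] := by
  ext i j
  fin_cases i <;> fin_cases j <;>
    norm_num [hPval, hMval, Matrix.mul_apply, Fin.sum_univ_two]

/-- Matrices on `(ℂ²)^{⊗L}` that are pure tensor products of one-site matrices. -/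
noncomputable def pMat (L : ℕ) (M : Fin L → Matrix (Fin 2) (Fin 2) ℂ) :
    Matrix (Fin L → Fin 2) (Fin L → Fin 2) ℂ :=
  Matrix.of fun f g => ∏ i, M i (f i) (g i)

lemma pMat_mul (L : ℕ) (M N : Fin L → Matrix (Fin 2) (Fin 2) ℂ) :
    pMat L M * pMat L N = pMat L (fun i => M i * N i) := by
  ext f g
  simp only [pMat, Matrix.mul_apply, Matrix.of_apply]
  rw [Finset.prod_univ_sum, Fintype.piFinset_univ]
  exact Finset.sum_congr rfl fun h _ => (Finset.prod_mul_distrib).symm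

lemma pMat_one (L : ℕ) : pMat L (fun _ => 1) = 1 := by
  ext f g
  simp only [pMat, Matrix.of_apply, Matrix.one_apply, Finset.prod_boole]
  by_cases h : f = g
  · subst h; simp
  · rw [if_neg h, if_neg]
    exact fun hall => h (funext fun i => hall i (Finset.mem_univ i))

lemma site_eq (L : ℕ) (A : Matrix (Fin 2) (Fin 2) ℂ) (j : Fin L) :
    site L A j = pMat L (fun i => if i = j then A else 1) := by
  ext f g
  simp only [site, pMat, Matrix.of_apply]
  rw [← Finset.prod_erase_mul Finset.univ _ (Finset.mem_univ j), if_pos rfl, mul_comm]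
  congr 1
  refine Finset.prod_congr rfl fun i hi => ?_
  rw [if_neg (Finset.ne_of_mem_erase hi), Matrix.one_apply]

lemma list_site_prod (L : ℕ) (l : List (Fin L)) (hl : l.Nodup) :
    (l.map (fun j => site L sigmaZ j)).prod
      = pMat L (fun i => if i ∈ l then sigmaZ else 1) := by
  induction l with
  | nil => simpa using (pMat_one L).symm
  | cons a l ih =>
    rw [List.map_cons, List.prod_cons, site_eq, ih hl.of_cons, pMat_mul]
    refine congrArg (pMat L) (funext fun i => ?_)
    by_cases hia : i = a
    · subst hia
      simp [List.Nodup.notMem hl]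
    · simp [hia, List.mem_cons]

lemma string_eq (L : ℕ) (k : Fin L) :
    (((List.finRange L).filter (fun j => j < k)).map (fun j => site L sigmaZ j)).prod
      = pMat L (fun i => if i < k then sigmaZ else 1) := by
  rw [list_site_prod L _ ((List.nodup_finRange L).filter _)]
  refine congrArg (pMat L) (funext fun i => ?_)
  simp [List.mem_filter]

/-- The one-site content of a Jordan–Wigner fermion. -/
noncomputable def eF (L : ℕ) (c : Fin L) (X : Matrix (Fin 2) (Fin 2) ℂ) :
    Fin L → Matrix (Fin 2) (Fin 2) ℂ :=
  fun i => (if i < c then sigmaZ else 1) * (if i = c then X else 1)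

lemma psi_eq (L : ℕ) (c : Fin L) : psi L c = pMat L (eF L c sigmaP) := by
  rw [psi, string_eq, site_eq, pMat_mul]; rfl

lemma psibar_eq (L : ℕ) (c : Fin L) : psibar L c = pMat L (eF L c sigmaM) := by
  rw [psibar, string_eq, site_eq, pMat_mul]; rfl

lemma eF_off (L : ℕ) (c : Fin L) (X : Matrix (Fin 2) (Fin 2) ℂ) (i : Fin L) (hic : i ≠ c) :
    eF L c X i = if i < c then sigmaZ else 1 := by
  simp only [eF]; rw [if_neg hic, mul_one]

lemma pMat_entry (L : ℕ) (k l : Fin L) (hkl : k ≠ l)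
    (F : Fin L → Matrix (Fin 2) (Fin 2) ℂ)
    (hF : ∀ i, i ≠ k → i ≠ l → F i = 1) (f g : Fin L → Fin 2) :
    pMat L F f g = F k (f k) (g k) * F l (f l) (g l) *
      ∏ i ∈ (Finset.univ.erase k).erase l, (if f i = g i then (1:ℂ) else 0) := by
  simp only [pMat, Matrix.of_apply]
  rw [← Finset.prod_erase_mul Finset.univ _ (Finset.mem_univ k),
      ← Finset.prod_erase_mul (Finset.univ.erase k) _
        (Finset.mem_erase.mpr ⟨Ne.symm hkl, Finset.mem_univ l⟩)]
  rw [show (∏ i ∈ (Finset.univ.erase k).erase l, F i (f i) (g i))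
      = ∏ i ∈ (Finset.univ.erase k).erase l, (if f i = g i then (1:ℂ) else 0) from by
    refine Finset.prod_congr rfl fun i hi => ?_
    obtain ⟨hil, hik, -⟩ : i ≠ l ∧ i ≠ k ∧ i ∈ Finset.univ := by
      simpa [Finset.mem_erase] using hi
    rw [hF i hik hil, Matrix.one_apply]]
  ring

lemma swap_entry (L : ℕ) (k l : Fin L) (hkl : k ≠ l) (f g : Fin L → Fin 2) :
    swapMat L k l f g = (if f k = g l then (1:ℂ) else 0) * (if f l = g k then 1 else 0) *
      ∏ i ∈ (Finset.univ.erase k).erase l, (if f i = g i then (1:ℂ) else 0) := by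
  rw [Finset.prod_boole]
  have key : (f = g ∘ Equiv.swap k l)
      ↔ (f k = g l ∧ f l = g k ∧ ∀ i ∈ (Finset.univ.erase k).erase l, f i = g i) := by
    constructor
    · intro h
      refine ⟨?_, ?_, fun i hi => ?_⟩
      · rw [h]; simp
      · rw [h]; simp
      · obtain ⟨hil, hik, -⟩ : i ≠ l ∧ i ≠ k ∧ i ∈ Finset.univ := by
          simpa [Finset.mem_erase] using hi
        rw [h]; simp [Equiv.swap_apply_of_ne_of_ne hik hil]
    · rintro ⟨h1, h2, h3⟩
      funext i
      rcases eq_or_ne i k with rfl | hik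
      · simpa using h1
      rcases eq_or_ne i l with rfl | hil
      · simpa using h2
      · simpa [Equiv.swap_apply_of_ne_of_ne hik hil] using
          h3 i (Finset.mem_erase.mpr ⟨hil, Finset.mem_erase.mpr ⟨hik, Finset.mem_univ i⟩⟩)
  simp only [swapMat, key]
  by_cases h1 : f k = g l <;> by_cases h2 : f l = g k <;>
    by_cases h3 : ∀ i ∈ (Finset.univ.erase k).erase l, f i = g i <;>
      simp [h1, h2, h3]

/-- fermionic expression for the permutation operator `P_{k,k+1}`. -/
theorem swap_as_fermions (L : ℕ) (k : Fin L) (hk : (k : ℕ) + 1 < L) :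
    swapMat L k ⟨(k : ℕ) + 1, hk⟩
      = 1 + psibar L ⟨(k : ℕ) + 1, hk⟩ * psi L k + psibar L k * psi L ⟨(k : ℕ) + 1, hk⟩
          - psibar L k * psi L k - psibar L ⟨(k : ℕ) + 1, hk⟩ * psi L ⟨(k : ℕ) + 1, hk⟩
          + (2 : ℂ) • (psibar L k * psi L k
              * (psibar L ⟨(k : ℕ) + 1, hk⟩ * psi L ⟨(k : ℕ) + 1, hk⟩)) := by
  set k1 : Fin L := ⟨(k : ℕ) + 1, hk⟩ with hk1def
  have hlt : k < k1 := by simp [Fin.lt_def, hk1def]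
  have hne : k ≠ k1 := Fin.ne_of_lt hlt
  have hnlt : ¬ k1 < k := not_lt_of_gt hlt
  have hne' : k1 ≠ k := Ne.symm hne
  have key : ∀ i : Fin L, i ≠ k → ((i < k1) ↔ (i < k)) := by
    intro i hik
    have : (i : ℕ) ≠ (k : ℕ) := fun h => hik (Fin.ext h)
    simp only [Fin.lt_def, hk1def]
    omega
  -- pairs of fermion factors are trivial away from sites k, k1
  have pairoff : ∀ (X Y : Matrix (Fin 2) (Fin 2) ℂ) (c d : Fin L),
      (c = k ∨ c = k1) → (d = k ∨ d = k1) → ∀ i, i ≠ k → i ≠ k1 →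
        eF L c X i * eF L d Y i = 1 := by
    intro X Y c d hc hd i hik hik1
    have h1 : eF L c X i = if i < k then sigmaZ else 1 := by
      rw [eF_off L c X i (by rcases hc with rfl | rfl; exacts [hik, hik1])]
      rcases hc with rfl | rfl
      · rfl
      · exact if_congr (key i hik) rfl rfl
    have h2 : eF L d Y i = if i < k then sigmaZ else 1 := by
      rw [eF_off L d Y i (by rcases hd with rfl | rfl; exacts [hik, hik1])]
      rcases hd with rfl | rfl
      · rfl
      · exact if_congr (key i hik) rfl rfl
    rw [h1, h2]
    by_cases h : i < k <;> simp [h, hZZ]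
  have e0 : (1 : Matrix (Fin L → Fin 2) (Fin L → Fin 2) ℂ) = pMat L (fun _ => 1) :=
    (pMat_one L).symm
  have e1 : psibar L k1 * psi L k = pMat L (fun i => eF L k1 sigmaM i * eF L k sigmaP i) := by
    rw [psi_eq, psibar_eq, pMat_mul]
  have e2 : psibar L k * psi L k1 = pMat L (fun i => eF L k sigmaM i * eF L k1 sigmaP i) := by
    rw [psi_eq, psibar_eq, pMat_mul]
  have e3 : psibar L k * psi L k = pMat L (fun i => eF L k sigmaM i * eF L k sigmaP i) := by
    rw [psi_eq, psibar_eq, pMat_mul]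
  have e4 : psibar L k1 * psi L k1 = pMat L (fun i => eF L k1 sigmaM i * eF L k1 sigmaP i) := by
    rw [psi_eq, psibar_eq, pMat_mul]
  have e5 : psibar L k * psi L k * (psibar L k1 * psi L k1)
      = pMat L (fun i => (eF L k sigmaM i * eF L k sigmaP i)
          * (eF L k1 sigmaM i * eF L k1 sigmaP i)) := by
    rw [e3, e4, pMat_mul]
  rw [e0, e5, e1, e2, e3, e4]
  ext f g
  have hF0 : ∀ i : Fin L, i ≠ k → i ≠ k1 → (1 : Matrix (Fin 2) (Fin 2) ℂ) = 1 :=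
    fun _ _ _ => rfl
  have hF1 : ∀ i, i ≠ k → i ≠ k1 → eF L k1 sigmaM i * eF L k sigmaP i = 1 :=
    pairoff _ _ _ _ (Or.inr rfl) (Or.inl rfl)
  have hF2 : ∀ i, i ≠ k → i ≠ k1 → eF L k sigmaM i * eF L k1 sigmaP i = 1 :=
    pairoff _ _ _ _ (Or.inl rfl) (Or.inr rfl)
  have hF3 : ∀ i, i ≠ k → i ≠ k1 → eF L k sigmaM i * eF L k sigmaP i = 1 :=
    pairoff _ _ _ _ (Or.inl rfl) (Or.inl rfl)
  have hF4 : ∀ i, i ≠ k → i ≠ k1 → eF L k1 sigmaM i * eF L k1 sigmaP i = 1 :=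
    pairoff _ _ _ _ (Or.inr rfl) (Or.inr rfl)
  have hF5 : ∀ i, i ≠ k → i ≠ k1 →
      (eF L k sigmaM i * eF L k sigmaP i) * (eF L k1 sigmaM i * eF L k1 sigmaP i) = 1 := by
    intro i hik hik1
    rw [hF3 i hik hik1, hF4 i hik hik1, one_mul]
  simp only [Matrix.add_apply, Matrix.sub_apply, Matrix.smul_apply, smul_eq_mul]
  rw [swap_entry L k k1 hne f g,
      pMat_entry L k k1 hne _ hF0 f g,
      pMat_entry L k k1 hne _ hF1 f g,
      pMat_entry L k k1 hne _ hF2 f g,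
      pMat_entry L k k1 hne _ hF3 f g,
      pMat_entry L k k1 hne _ hF4 f g,
      pMat_entry L k k1 hne _ hF5 f g]
  simp only [eF, lt_irrefl, if_true, if_false, if_pos hlt, if_neg hne, if_neg hnlt,
    if_neg hne', if_pos rfl, one_mul, mul_one]
  simp only [hZZ, hZP, hMZ, hMP, one_mul, mul_one]
  simp only [hPval, hMval, Matrix.one_apply]
  generalize (∏ i ∈ (Finset.univ.erase k).erase k1, if f i = g i then (1:ℂ) else 0) = D
  generalize f k = a
  generalize f k1 = b
  generalize g k = c
  generalize g k1 = e
  fin_cases a <;> fin_cases b <;> fin_cases c <;> fin_cases e <;>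
    norm_num [Matrix.cons_val_zero, Matrix.cons_val_one, Matrix.head_cons] <;> ring
end

section
/- Let α, δ : ℂ → ℂ and let B(λ), A(λ) be operators on a vector space satisfying the exchange relation A(μ)B(λ) = f(λ,μ)B(λ)A(μ) + g(μ,λ)B(μ)A(λ) with f(λ,μ) = (λ-μ+1)/(λ-μ) and g(λ,μ) = 1/(λ-μ), together with [B(λ),B(μ)] = 0, and a vector |0⟩ with A(λ)|0⟩ = α(λ)|0⟩. Then for distinct parameters λ, λ₁,...,λ_M, A(λ)B(λ₁)...B(λ_M)|0⟩ = α(λ)∏_{k=1}^M f(λ_k,λ)·B(λ₁)...B(λ_M)|0⟩ + Σ_{i=1}^M Φ_i·B(λ₁)...B(λ_{i-1})B(λ)B(λ_{i+1})...B(λ_M)|0⟩, where Φ_i = α(λ_i)·g(λ,λ_i)·∏_{k≠i} f(λ_k,λ_i). -/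
/-!
Induction on `M`. Writing the first factor as `B(μ)`, the exchange relation moves `A(λ)` past it
at the cost of two terms, `f(μ,λ) B(μ) A(λ) ⋯` and `g(λ,μ) B(λ) A(μ) ⋯`, to each of which the
induction hypothesis applies (at `λ` and at `μ`). Since the `B`'s commute, the vectors in the two
resulting sums coincide term by term, and their coefficients combine through the identity
`f(μ,λ) g(λ,ν) + g(λ,μ) g(μ,ν) = g(λ,ν) f(μ,ν)`.
-/

/-- XXX structure function `f(λ,μ) = (λ-μ+1)/(λ-μ)`. -/
noncomputable def fXXX (l m : ℂ) : ℂ := (l - m + 1) / (l - m)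

/-- XXX structure function `g(λ,μ) = 1/(λ-μ)`. -/
noncomputable def gXXX (l m : ℂ) : ℂ := 1 / (l - m)

theorem fXXX_mul_gXXX_add_gXXX_mul_gXXX {μ ν l : ℂ} (hμ : μ ≠ l) (hν : ν ≠ l) (hμν : μ ≠ ν) :
    fXXX μ l * gXXX l ν + gXXX l μ * gXXX μ ν = gXXX l ν * fXXX μ ν := by
  have := sub_ne_zero.2 hμ
  have := sub_ne_zero.2 hν.symm
  have := sub_ne_zero.2 hμν
  have := sub_ne_zero.2 hμ.symm
  unfold fXXX gXXX
  field_simp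
  ring

namespace Fin

variable {β : Type*} [CommMonoid β] {M : ℕ}

theorem prod_univ_erase_zero (F : Fin (M + 1) → β) :
    ∏ k ∈ Finset.univ.erase 0, F k = ∏ k : Fin M, F k.succ := by
  rw [univ_succ, Finset.erase_cons, Finset.prod_map]
  rfl

theorem prod_univ_erase_succ (F : Fin (M + 1) → β) (j : Fin M) :
    ∏ k ∈ Finset.univ.erase j.succ, F k = F 0 * ∏ k ∈ Finset.univ.erase j, F k.succ := by
  rw [univ_succAbove _ 0, Finset.erase_cons_of_ne _ (succ_ne_zero j).symm, Finset.prod_cons,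
    ← succAbove_zero_apply, ← coe_succAboveEmb, ← Finset.map_erase, Finset.prod_map]
  simp

end Fin

section BetheVector

variable {V : Type*} [AddCommGroup V] [Module ℂ V]

def betheVector (B : ℂ → Module.End ℂ V) (v0 : V) {M : ℕ} (lam : Fin M → ℂ) : V :=
  (List.ofFn fun i => B (lam i)).prod v0

variable (B : ℂ → Module.End ℂ V) (v0 : V)

@[simp]
theorem betheVector_zero (lam : Fin 0 → ℂ) : betheVector B v0 lam = v0 := rfl

@[simp]
theorem betheVector_cons {M : ℕ} (x : ℂ) (lam : Fin M → ℂ) :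
    betheVector B v0 (Fin.cons x lam) = B x (betheVector B v0 lam) := by
  simp [betheVector, List.ofFn_succ, Module.End.mul_apply]

theorem apply_betheVector_update_comm (hBB : ∀ l m : ℂ, B l * B m = B m * B l) (a b : ℂ) :
    ∀ {M : ℕ} (lam : Fin M → ℂ) (j : Fin M),
      B a (betheVector B v0 (Function.update lam j b))
        = B b (betheVector B v0 (Function.update lam j a))
  | 0, _, j => j.elim0
  | M + 1, lam, j => by
    induction lam using Fin.consCases with
    | cons x lam =>
    induction j using Fin.cases with
    | zero =>
      simp only [Fin.update_cons_zero, betheVector_cons, ← Module.End.mul_apply, hBB a b]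
    | succ j =>
      simp only [← Fin.cons_update, betheVector_cons, ← Module.End.mul_apply, hBB _ x]
      simp only [Module.End.mul_apply, apply_betheVector_update_comm hBB a b lam j]

variable (A : ℂ → Module.End ℂ V) (α : ℂ → ℂ)

theorem A_apply_betheVector (hBB : ∀ l m : ℂ, B l * B m = B m * B l)
    (hAB : ∀ l m : ℂ, l ≠ m → A m * B l = fXXX l m • (B l * A m) + gXXX m l • (B m * A l))
    (hA0 : ∀ l : ℂ, A l v0 = α l • v0) :
    ∀ {M : ℕ} (lam : Fin M → ℂ), Function.Injective lam → ∀ l0, (∀ i, lam i ≠ l0) →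
      A l0 (betheVector B v0 lam)
        = (α l0 * ∏ k, fXXX (lam k) l0) • betheVector B v0 lam
          + ∑ i, (α (lam i) * gXXX l0 (lam i)
                * ∏ k ∈ Finset.univ.erase i, fXXX (lam k) (lam i)) •
              betheVector B v0 (Function.update lam i l0)
  | 0, _, _, _, _ => by simp [hA0]
  | M + 1, lam, hinj, l0, hl0 => by
    induction lam using Fin.consCases with
    | cons μ lam =>
    have hμ : ∀ i, lam i ≠ μ := fun i h => Fin.succ_ne_zero i (hinj (by simpa using h))
    have hinj' : Function.Injective lam := fun i j h =>
      Fin.succ_injective _ (hinj (by simpa using h))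
    have hμ0 : μ ≠ l0 := by simpa using hl0 0
    have hl0' : ∀ i, lam i ≠ l0 := fun i => by simpa using hl0 i.succ
    have hexchange := LinearMap.congr_fun (hAB μ l0 hμ0) (betheVector B v0 lam)
    simp only [Module.End.mul_apply, LinearMap.add_apply, LinearMap.smul_apply] at hexchange
    simp only [betheVector_cons, hexchange,
      A_apply_betheVector hBB hAB hA0 lam hinj' l0 hl0',
      A_apply_betheVector hBB hAB hA0 lam hinj' μ hμ,
      map_add, map_smul, map_sum, smul_add, Finset.smul_sum, smul_smul,
      apply_betheVector_update_comm B v0 hBB l0 μ, Fin.prod_univ_succ, Fin.sum_univ_succ,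
      Fin.prod_univ_erase_zero, Fin.prod_univ_erase_succ, Fin.cons_zero, Fin.cons_succ,
      Fin.update_cons_zero, ← Fin.cons_update]
    have hcoeff : ∀ i, ∀ P : ℂ,
        fXXX μ l0 * (α (lam i) * gXXX l0 (lam i) * P) + gXXX l0 μ * (α (lam i) * gXXX μ (lam i) * P)
          = α (lam i) * gXXX l0 (lam i) * (fXXX μ (lam i) * P) := fun i P => by
      linear_combination α (lam i) * P *
        fXXX_mul_gXXX_add_gXXX_mul_gXXX hμ0 (hl0' i) (hμ i).symm
    simp only [← hcoeff, add_smul, Finset.sum_add_distrib]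
    module

end BetheVector

/-- action of `A(λ)` on a product of `B`-operators applied to the
pseudovacuum (the key step of the algebraic Bethe ansatz). -/
theorem A_on_Bethe_vector {V : Type*} [AddCommGroup V] [Module ℂ V]
    (A B : ℂ → Module.End ℂ V) (α : ℂ → ℂ) (v0 : V)
    (hBB : ∀ l m : ℂ, B l * B m = B m * B l)
    (hAB : ∀ l m : ℂ, l ≠ m →
      A m * B l = fXXX l m • (B l * A m) + gXXX m l • (B m * A l))
    (hA0 : ∀ l : ℂ, A l v0 = α l • v0)
    (M : ℕ) (lam : Fin M → ℂ) (l0 : ℂ)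
    (hdist : ∀ i j, i ≠ j → lam i ≠ lam j) (hl0 : ∀ i, lam i ≠ l0) :
    A l0 ((List.ofFn fun i => B (lam i)).prod v0)
      = (α l0 * ∏ k, fXXX (lam k) l0) • ((List.ofFn fun i => B (lam i)).prod v0)
        + ∑ i, (α (lam i) * gXXX l0 (lam i)
              * ∏ k ∈ Finset.univ.erase i, fXXX (lam k) (lam i)) •
            ((List.ofFn fun k => B (if k = i then l0 else lam k)).prod v0) := by
  have key := A_apply_betheVector B v0 A α hBB hAB hA0 lam
    (fun i j h => not_imp_not.1 (hdist i j) h) l0 hl0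
  simpa only [betheVector, Function.update_apply] using key
end

section
/- Let q ∈ ℂ be nonzero and set λ = q - q⁻¹, q̄ = q + q⁻¹. In the Hecke algebra H₃(q) (generators T₁, T₂ with braid and Hecke relations), the element H₃ = T₁ + T₂ - λ satisfies the characteristic identity (H₃ + q̄)(H₃ - q̄)(H₃ - 1)(H₃ + 1) = 0 in every finite-dimensional representation; concretely, for 2×2 complex matrices t₁, t₂ satisfying t₁t₂t₁ = t₂t₁t₂ and tᵢ² = λtᵢ + I, the matrix h = t₁ + t₂ - λI satisfies (h + q̄I)(h - q̄I)(h - I)(h + I) = 0. -/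
set_option linter.unnecessarySeqFocus false
set_option linter.unreachableTactic false
set_option linter.unusedTactic false
set_option maxHeartbeats 1000000

private theorem hecke_chain_aux {R : Type*} [Ring R] [Algebra ℂ R] (q : ℂ) (hq : q ≠ 0)
    (t1 t2 : R)
    (hbraid : t1 * t2 * t1 = t2 * t1 * t2)
    (h1 : t1 * t1 = (q - q⁻¹) • t1 + 1)
    (h2 : t2 * t2 = (q - q⁻¹) • t2 + 1) :
    (t1 + t2 - (q - q⁻¹) • (1 : R) + (q + q⁻¹) • 1)
      * (t1 + t2 - (q - q⁻¹) • (1 : R) - (q + q⁻¹) • 1)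
      * (t1 + t2 - (q - q⁻¹) • (1 : R) - 1)
      * (t1 + t2 - (q - q⁻¹) • (1 : R) + 1) = 0 := by
  have hqq : q * q⁻¹ = 1 := mul_inv_cancel₀ hq
  set e1 : R := q • 1 - t1 with he1d
  set e2 : R := q • 1 - t2 with he2d
  have he1sq : e1 * e1 = (q + q⁻¹) • e1 := by
    simp only [he1d, sub_mul, mul_sub, smul_mul_assoc, mul_smul_comm, one_mul, mul_one,
      smul_smul, h1, smul_add, smul_sub]
    match_scalars <;> field_simp <;> ring
  have he2sq : e2 * e2 = (q + q⁻¹) • e2 := by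
    simp only [he2d, sub_mul, mul_sub, smul_mul_assoc, mul_smul_comm, one_mul, mul_one,
      smul_smul, h2, smul_add, smul_sub]
    match_scalars <;> field_simp <;> ring
  have hzeq : e1 * e2 * e1 - e1 = e2 * e1 * e2 - e2 := by
    simp only [he1d, he2d, sub_mul, mul_sub, smul_mul_assoc, mul_smul_comm, one_mul, mul_one,
      smul_smul, h1, h2, hbraid, smul_add, smul_sub]
    match_scalars <;> field_simp <;> ring
  set z : R := e1 * e2 * e1 - e1 with hzd
  have hz' : z = e2 * e1 * e2 - e2 := hzeq
  have he1z : e1 * z = (q + q⁻¹) • z := by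
    simp only [hzd, mul_sub, ← mul_assoc, he1sq, smul_mul_assoc, smul_sub]
  have hze1 : z * e1 = (q + q⁻¹) • z := by
    simp only [hzd, sub_mul, mul_assoc, he1sq, mul_smul_comm, smul_sub]
  have he2z : e2 * z = (q + q⁻¹) • z := by
    rw [hz']
    simp only [mul_sub, ← mul_assoc, he2sq, smul_mul_assoc, smul_sub]
  have hze2 : z * e2 = (q + q⁻¹) • z := by
    rw [hz']
    simp only [sub_mul, mul_assoc, he2sq, mul_smul_comm, smul_sub]
  have w1r : e1 * (e2 * e1) = z + e1 := by rw [← mul_assoc, hzd, sub_add_cancel]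
  have w2r : e2 * (e1 * e2) = z + e2 := by rw [← mul_assoc, hz', sub_add_cancel]
  have v1 : ∀ x : R, e1 * (e1 * x) = (q + q⁻¹) • (e1 * x) := by
    intro x; rw [← mul_assoc, he1sq, smul_mul_assoc]
  have v2 : ∀ x : R, e2 * (e2 * x) = (q + q⁻¹) • (e2 * x) := by
    intro x; rw [← mul_assoc, he2sq, smul_mul_assoc]
  have ht1 : t1 = q • 1 - e1 := by rw [he1d, sub_sub_cancel]
  have ht2 : t2 = q • 1 - e2 := by rw [he2d, sub_sub_cancel]
  have hh : t1 + t2 - (q - q⁻¹) • (1 : R) = (q + q⁻¹) • 1 - (e1 + e2) := by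
    rw [ht1, ht2]; module
  rw [hh]
  have f1 : ((q + q⁻¹) • (1 : R) - (e1 + e2) + (q + q⁻¹) • 1)
      * ((q + q⁻¹) • (1 : R) - (e1 + e2) - (q + q⁻¹) • 1)
      = (e1 * e2 + e2 * e1) - (q + q⁻¹) • (e1 + e2) := by
    simp only [add_mul, mul_add, sub_mul, mul_sub, smul_mul_assoc, mul_smul_comm, one_mul,
      mul_one, he1sq, he2sq, smul_add, smul_sub, smul_smul]
    module
  have f2 : ((q + q⁻¹) • (1 : R) - (e1 + e2) - 1)
      * ((q + q⁻¹) • (1 : R) - (e1 + e2) + 1)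
      = ((e1 * e2 + e2 * e1) - (q + q⁻¹) • (e1 + e2)) + ((q + q⁻¹) ^ 2 - 1) • 1 := by
    simp only [add_mul, mul_add, sub_mul, mul_sub, smul_mul_assoc, mul_smul_comm, one_mul,
      mul_one, he1sq, he2sq, smul_add, smul_sub, smul_smul]
    module
  have f3 : ((e1 * e2 + e2 * e1) - (q + q⁻¹) • (e1 + e2))
      * ((e1 * e2 + e2 * e1) - (q + q⁻¹) • (e1 + e2))
      = (1 - (q + q⁻¹) ^ 2) • ((e1 * e2 + e2 * e1) - (q + q⁻¹) • (e1 + e2)) := by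
    simp only [add_mul, mul_add, sub_mul, mul_sub, smul_mul_assoc, mul_smul_comm,
      smul_add, smul_sub, smul_smul, mul_assoc, v1, v2, w1r, w2r, he1z, he2z, hze1, hze2,
      he1sq, he2sq]
    module
  rw [mul_assoc, f1, f2, mul_add, f3, mul_smul_comm, mul_one]
  module

/-- characteristic identity for the open Hecke chain Hamiltonian
`H₃ = T₁ + T₂ - λ` in any matrix representation of `H₃(q)`:
`(H₃+q̄)(H₃-q̄)(H₃-1)(H₃+1) = 0`, where `λ = q-q⁻¹` and `q̄ = q+q⁻¹`. -/
theorem hecke_chain_three_characteristic (q : ℂ) (hq : q ≠ 0) (n : ℕ)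
    (t1 t2 : Matrix (Fin n) (Fin n) ℂ)
    (hbraid : t1 * t2 * t1 = t2 * t1 * t2)
    (h1 : t1 * t1 = (q - q⁻¹) • t1 + 1)
    (h2 : t2 * t2 = (q - q⁻¹) • t2 + 1) :
    (t1 + t2 - (q - q⁻¹) • (1 : Matrix (Fin n) (Fin n) ℂ) + (q + q⁻¹) • 1)
      * (t1 + t2 - (q - q⁻¹) • (1 : Matrix (Fin n) (Fin n) ℂ) - (q + q⁻¹) • 1)
      * (t1 + t2 - (q - q⁻¹) • (1 : Matrix (Fin n) (Fin n) ℂ) - 1)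
      * (t1 + t2 - (q - q⁻¹) • (1 : Matrix (Fin n) (Fin n) ℂ) + 1) = 0 :=
  hecke_chain_aux q hq t1 t2 hbraid h1 h2
end
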